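/- Regard the dual metric coefficients g^{αβ}(p) = m^{αβ} - (m^{αγ} m^{βδ} p_γ p_δ)/(1 + m^{μν} p_μ p_ν) as smooth functions of p ∈ R^{n+1} on the open set where 1 + m^{μν} p_μ p_ν > 0. Then the partial derivative with respect to p_γ satisfies ∂g^{αβ}/∂p_γ = -p^α g^{βγ} - p^β g^{αγ}, where p^α := g^{αδ} p_δ. -/

import Mathlib

noncomputable section

open scoped BigOperators

/-- The Minkowski metric `diag(-1,1,...,1)` on `ℝ^{n+1}` (it is its own inverse). -/
def mink (n : ℕ) (α β : Fin (n + 1)) : ℝ :=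
  if α = β then (if α = 0 then -1 else 1) else 0

/-- `m^{μν} p_μ p_ν` for a fixed vector `p` (the gradient `∂u` at a point). -/
def mSq (n : ℕ) (p : Fin (n + 1) → ℝ) : ℝ :=
  ∑ μ, ∑ ν, mink n μ ν * p μ * p ν

/-- The induced metric `g_{αβ} = m_{αβ} + p_α p_β`. -/
def gLow (n : ℕ) (p : Fin (n + 1) → ℝ) (α β : Fin (n + 1)) : ℝ :=
  mink n α β + p α * p β

/-- The dual metric `G^{αβ} = m^{αβ} - (m^{αγ} m^{βδ} p_γ p_δ)/(1 + m^{μν} p_μ p_ν)`. -/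
def gUp (n : ℕ) (p : Fin (n + 1) → ℝ) (α β : Fin (n + 1)) : ℝ :=
  mink n α β - (∑ γ, mink n α γ * p γ) * (∑ δ, mink n β δ * p δ) / (1 + mSq n p)

/-- `p^α := g^{αδ} p_δ`, the index of `p` raised with the dual metric `g^{αβ}(p)`. -/
def pUp (n : ℕ) (p : Fin (n + 1) → ℝ) (α : Fin (n + 1)) : ℝ :=
  ∑ δ, gUp n p α δ * p δ

/-!
Write `a^α = m^{αδ} p_δ` and `D = 1 + m^{μν} p_μ p_ν`, so that `g^{αβ} = m^{αβ} - a^α a^β / D`.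
Since `a^δ p_δ = D - 1`, raising the index of `p` with `g` gives `p^α = a^α / D`. Along the line
`p + t e_γ` one has `∂a^α = m^{αγ}` and `∂D = 2 a^γ` (by symmetry of `m`), so the quotient rule
gives `∂g^{αβ} = -(m^{αγ} a^β + a^α m^{βγ}) / D + 2 a^α a^β a^γ / D²`, which is
`-p^α g^{βγ} - p^β g^{αγ}`. As `g` is differentiable where `D ≠ 0`, this line derivative is the
Fréchet partial derivative.
-/

def minkRaise (n : ℕ) (α : Fin (n + 1)) : (Fin (n + 1) → ℝ) →L[ℝ] ℝ :=
  ∑ δ, mink n α δ • ContinuousLinearMap.proj δ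

section

variable {n : ℕ}

lemma mink_symm (α β : Fin (n + 1)) : mink n α β = mink n β α := by
  unfold mink
  split_ifs <;> simp_all

lemma minkRaise_apply (α : Fin (n + 1)) (q : Fin (n + 1) → ℝ) :
    minkRaise n α q = ∑ δ, mink n α δ * q δ := by
  simp [minkRaise]

lemma minkRaise_single (α γ : Fin (n + 1)) : minkRaise n α (Pi.single γ 1) = mink n α γ := by
  simp [minkRaise_apply, Pi.single_apply]

lemma sum_minkRaise_mul_comm (u v : Fin (n + 1) → ℝ) :
    ∑ δ, minkRaise n δ u * v δ = ∑ δ, minkRaise n δ v * u δ := by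
  simp only [minkRaise_apply, Finset.sum_mul]
  rw [Finset.sum_comm]
  exact Finset.sum_congr rfl fun _ _ => Finset.sum_congr rfl fun _ _ => by
    rw [mink_symm]
    ring

lemma mSq_eq_sum_minkRaise (q : Fin (n + 1) → ℝ) : mSq n q = ∑ δ, minkRaise n δ q * q δ := by
  simp only [mSq, minkRaise_apply, Finset.sum_mul]
  exact Finset.sum_congr rfl fun _ _ => Finset.sum_congr rfl fun _ _ => by ring

lemma gUp_eq (q : Fin (n + 1) → ℝ) (α β : Fin (n + 1)) :
    gUp n q α β = mink n α β - minkRaise n α q * minkRaise n β q / (1 + mSq n q) := by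
  simp only [gUp, minkRaise_apply]

lemma pUp_eq {p : Fin (n + 1) → ℝ} (hD : 1 + mSq n p ≠ 0) (α : Fin (n + 1)) :
    pUp n p α = minkRaise n α p / (1 + mSq n p) :=
  calc pUp n p α = minkRaise n α p - minkRaise n α p * mSq n p / (1 + mSq n p) := by
        simp only [pUp, gUp_eq, sub_mul, Finset.sum_sub_distrib, mSq_eq_sum_minkRaise p,
          Finset.mul_sum, Finset.sum_div]
        congr 1
        · simp only [minkRaise_apply]
        · exact Finset.sum_congr rfl fun δ _ => by ring
    _ = minkRaise n α p / (1 + mSq n p) := by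
        field_simp
        ring

lemma differentiableAt_gUp {p : Fin (n + 1) → ℝ} (hD : 1 + mSq n p ≠ 0) (α β : Fin (n + 1)) :
    DifferentiableAt ℝ (fun q => gUp n q α β) p := by
  unfold gUp mSq
  fun_prop (disch := exact hD)

lemma hasLineDerivAt_mSq (p v : Fin (n + 1) → ℝ) :
    HasLineDerivAt ℝ (mSq n) (2 * ∑ δ, minkRaise n δ p * v δ) p v := by
  have hcoord (δ : Fin (n + 1)) : HasLineDerivAt ℝ (fun q : Fin (n + 1) → ℝ => q δ) (v δ) p v :=
    (ContinuousLinearMap.proj (R := ℝ) (φ := fun _ : Fin (n + 1) => ℝ) δ).hasFDerivAt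
      |>.hasLineDerivAt v
  have h := HasDerivAt.sum (u := Finset.univ) fun δ _ =>
    HasDerivAt.mul ((minkRaise n δ).hasFDerivAt.hasLineDerivAt (x := p) v) (hcoord δ)
  unfold HasLineDerivAt
  convert h using 1
  · funext t
    simp only [mSq_eq_sum_minkRaise, Finset.sum_apply, Pi.mul_apply]
  · simp only [zero_smul, add_zero, Finset.sum_add_distrib, sum_minkRaise_mul_comm v p]
    ring

lemma hasLineDerivAt_gUp {p : Fin (n + 1) → ℝ} (hD : 1 + mSq n p ≠ 0) (α β : Fin (n + 1))
    (v : Fin (n + 1) → ℝ) :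
    HasLineDerivAt ℝ (fun q => gUp n q α β)
      (-(((minkRaise n α v * minkRaise n β p + minkRaise n α p * minkRaise n β v) * (1 + mSq n p)
        - minkRaise n α p * minkRaise n β p * (2 * ∑ δ, minkRaise n δ p * v δ))
        / (1 + mSq n p) ^ 2))
      p v := by
  have hA := (minkRaise n α).hasFDerivAt.hasLineDerivAt (x := p) v
  have hB := (minkRaise n β).hasFDerivAt.hasLineDerivAt (x := p) v
  have h := ((HasDerivAt.mul hA hB).div (HasDerivAt.const_add 1 (hasLineDerivAt_mSq p v))
    (by simpa using hD)).const_sub (mink n α β)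
  simpa only [HasLineDerivAt, gUp_eq, Pi.div_apply, Pi.mul_apply, zero_smul, add_zero] using h

end

/-- the partial derivative of the dual metric coefficients with respect to
`p_γ` satisfies `∂g^{αβ}/∂p_γ = -p^α g^{βγ} - p^β g^{αγ}` on the set where
`1 + m^{μν} p_μ p_ν > 0`. -/
theorem dual_metric_deriv (n : ℕ) (p : Fin (n + 1) → ℝ)
    (hg : 0 < 1 + mSq n p) (α β γ : Fin (n + 1)) :
    fderiv ℝ (fun q => gUp n q α β) p (Pi.single γ 1)
      = -(pUp n p α * gUp n p β γ) - pUp n p β * gUp n p α γ := by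
  have hD := hg.ne'
  have hγ : ∑ δ, minkRaise n δ p * (Pi.single γ 1 : Fin (n + 1) → ℝ) δ = minkRaise n γ p := by
    simp [Pi.single_apply]
  rw [← (differentiableAt_gUp hD α β).lineDeriv_eq_fderiv,
    (hasLineDerivAt_gUp hD α β (Pi.single γ 1)).lineDeriv, minkRaise_single, minkRaise_single, hγ,
    pUp_eq hD, pUp_eq hD, gUp_eq, gUp_eq]
  field_simp
  ring
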